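/- The Muon update at W₀ equals the explicit matrix: G_Muon(W₀) = −[ Ẽ_{1:L}(I_L − (1/L)J_{L,L})E_{1:L}ᵀ + Ẽ_{L+1:K}(I_{K−L} − (1/(K−L))J_{K−L,K−L})E_{L+1:K}ᵀ + (1/√( K·(α²(K−L)³ + (1−α)²L³) ))·( (K−L)·Ẽ_{1:L}𝟙_L − L·Ẽ_{L+1:K}𝟙_{K−L} )·( ((K−L)α/L)·𝟙_LᵀE_{1:L}ᵀ − (L(1−α)/(K−L))·𝟙_{K−L}ᵀE_{L+1:K}ᵀ ) ]. -/

import Mathlib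

noncomputable section

open Matrix

attribute [local instance] Matrix.normedAddCommGroup Matrix.normedSpace

/-- Softmax probability that query `k` (key embedding = `k`-th column of `Ee`) is mapped
to object `k'` (`k'`-th column of `Et`):
`[f_W(E_k)]_{k'} = exp(Ẽ_{k'}ᵀ W E_k) / ∑_{k''} exp(Ẽ_{k''}ᵀ W E_k)`. -/
def prob {K : ℕ} (Et Ee W : Matrix (Fin K) (Fin K) ℝ) (k' k : Fin K) : ℝ :=
  Real.exp ((Etᵀ * W * Ee) k' k) / ∑ k'' : Fin K, Real.exp ((Etᵀ * W * Ee) k'' k)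

/-- Class frequencies: `p_k = α/L` for the first `L` classes, `p_k = (1-α)/(K-L)` for the rest. -/
def pclass (K L : ℕ) (α : ℝ) (k : Fin K) : ℝ :=
  if (k : ℕ) < L then α / L else (1 - α) / ((K : ℝ) - L)

/-- Population cross-entropy loss `𝓛(W) = -∑_k p_k log [f_W(E_k)]_k`. -/
def ploss {K : ℕ} (L : ℕ) (α : ℝ) (Et Ee W : Matrix (Fin K) (Fin K) ℝ) : ℝ :=
  -∑ k : Fin K, pclass K L α k * Real.log (prob Et Ee W k k)

/-- `G` is the Fréchet gradient of `f` at `W` with respect to the Frobenius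
inner product: `f` is differentiable at `W` with differential `H ↦ trace(Gᵀ H)`. -/
def IsGradientAt {K : ℕ} (f : Matrix (Fin K) (Fin K) ℝ → ℝ)
    (G W : Matrix (Fin K) (Fin K) ℝ) : Prop :=
  ∃ l : Matrix (Fin K) (Fin K) ℝ →L[ℝ] ℝ, HasFDerivAt f l W ∧ ∀ H, l H = (Gᵀ * H).trace

/-- `(U, d, V)` is a singular value decomposition of `G`: `U`, `V` orthogonal,
`d` nonnegative, and `G = U · diagonal d · Vᵀ`. -/
def IsSVD {K : ℕ} (G U : Matrix (Fin K) (Fin K) ℝ) (d : Fin K → ℝ)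
    (V : Matrix (Fin K) (Fin K) ℝ) : Prop :=
  Uᵀ * U = 1 ∧ U * Uᵀ = 1 ∧ Vᵀ * V = 1 ∧ V * Vᵀ = 1 ∧ (∀ i, 0 ≤ d i) ∧
    G = U * Matrix.diagonal d * Vᵀ

/-- `U · norm(Σ) · Vᵀ`, where `norm(Σ)` replaces every nonzero diagonal entry of
`Σ = diagonal d` by `1`. -/
def muonOf {K : ℕ} (U : Matrix (Fin K) (Fin K) ℝ) (d : Fin K → ℝ)
    (V : Matrix (Fin K) (Fin K) ℝ) : Matrix (Fin K) (Fin K) ℝ :=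
  U * Matrix.diagonal (fun i => if d i = 0 then (0 : ℝ) else 1) * Vᵀ

/-- Indicator of the first `L` coordinates (embedding of `L`-vectors into `K`-vectors). -/
def indL (K L : ℕ) : Fin K → ℝ := fun i => if (i : ℕ) < L then 1 else 0

/-- Indicator of the last `K - L` coordinates. -/
def indU (K L : ℕ) : Fin K → ℝ := fun i => if (i : ℕ) < L then 0 else 1

def vt (K L : ℕ) (c₁ c₂ : ℝ) : Fin K → ℝ := fun i => if (i : ℕ) < L then c₁ else c₂


namespace vt
variable {K L : ℕ} (c₁ c₂ e₁ e₂ : ℝ)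

lemma mul_vt : vt K L c₁ c₂ * vt K L e₁ e₂ = vt K L (c₁*e₁) (c₂*e₂) := by
  funext i; simp only [vt, Pi.mul_apply]; split <;> ring

lemma card_filter (hLK : L ≤ K) :
    (Finset.univ.filter (fun i : Fin K => (i:ℕ) < L)).card = L := by
  have : (Finset.univ.filter (fun i : Fin K => (i:ℕ) < L)) =
      (Finset.range L).attachFin (fun m hm => lt_of_lt_of_le (Finset.mem_range.mp hm) hLK) := by
    ext i; simp [Finset.mem_attachFin]
  rw [this, Finset.card_attachFin, Finset.card_range]

lemma dot_vt (hLK : L ≤ K) :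
    vt K L c₁ c₂ ⬝ᵥ vt K L e₁ e₂ = c₁*e₁*L + c₂*e₂*((K:ℝ) - L) := by
  classical
  rw [dotProduct]
  rw [Finset.sum_congr rfl (fun i _ => by
    show vt K L c₁ c₂ i * vt K L e₁ e₂ i = if (i:ℕ) < L then c₁*e₁ else c₂*e₂
    simp only [vt]; split <;> ring)]
  rw [Finset.sum_ite, Finset.sum_const, Finset.sum_const]
  have h1 : (Finset.univ.filter (fun i : Fin K => (i:ℕ) < L)).card = L := card_filter hLK
  have h2 : (Finset.univ.filter (fun i : Fin K => ¬ (i:ℕ) < L)).card = K - L := by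
    have := Finset.card_filter_add_card_filter_not (s := (Finset.univ : Finset (Fin K)))
      (p := fun i : Fin K => (i:ℕ) < L)
    simp only [Finset.card_univ, Fintype.card_fin, h1] at this
    omega
  rw [h1, h2, nsmul_eq_mul, nsmul_eq_mul]
  have : ((K - L : ℕ) : ℝ) = (K:ℝ) - L := by
    push_cast [Nat.cast_sub hLK]; ring
  rw [this]; ring
end vt

namespace Matrix
variable {K : ℕ} (a b c d f : Fin K → ℝ)

lemma vmv_mul_vmv : vecMulVec a b * vecMulVec c d = (b ⬝ᵥ c) • vecMulVec a d := by
  ext i j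
  simp only [mul_apply, vecMulVec_apply, smul_apply, smul_eq_mul, dotProduct,
    Finset.mul_sum, Finset.sum_mul]
  exact Finset.sum_congr rfl fun k _ => by ring

lemma diag_mul_vmv : diagonal f * vecMulVec a b = vecMulVec (f * a) b := by
  ext i j
  simp [diagonal_mul, vecMulVec_apply, mul_assoc]

lemma vmv_mul_diag : vecMulVec a b * diagonal f = vecMulVec a (b * f) := by
  ext i j
  simp [mul_diagonal, vecMulVec_apply, mul_assoc]

lemma vmv_transpose : (vecMulVec a b)ᵀ = vecMulVec b a := by
  ext i j; simp [vecMulVec_apply, mul_comm]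

lemma mul_vmv_mul (Et Ee : Matrix (Fin K) (Fin K) ℝ) :
    Et * vecMulVec a b * Eeᵀ = vecMulVec (Et *ᵥ a) (Ee *ᵥ b) := by
  ext i j
  simp only [mul_apply, vecMulVec_apply, mulVec, dotProduct, transpose_apply,
    Finset.mul_sum, Finset.sum_mul]
  refine Finset.sum_congr rfl fun k _ => Finset.sum_congr rfl fun l _ => by ring
end Matrix

/-! atoms -/
def D1 (K L : ℕ) : Matrix (Fin K) (Fin K) ℝ := Matrix.diagonal (vt K L 1 0)
def D2 (K L : ℕ) : Matrix (Fin K) (Fin K) ℝ := Matrix.diagonal (vt K L 0 1)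
def E11 (K L : ℕ) : Matrix (Fin K) (Fin K) ℝ := Matrix.vecMulVec (vt K L 1 0) (vt K L 1 0)
def E12 (K L : ℕ) : Matrix (Fin K) (Fin K) ℝ := Matrix.vecMulVec (vt K L 1 0) (vt K L 0 1)
def E21 (K L : ℕ) : Matrix (Fin K) (Fin K) ℝ := Matrix.vecMulVec (vt K L 0 1) (vt K L 1 0)
def E22 (K L : ℕ) : Matrix (Fin K) (Fin K) ℝ := Matrix.vecMulVec (vt K L 0 1) (vt K L 0 1)

lemma diag_decomp {K L : ℕ} (c₁ c₂ : ℝ) :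
    Matrix.diagonal (vt K L c₁ c₂) = c₁ • D1 K L + c₂ • D2 K L := by
  ext i j
  simp only [D1, D2, Matrix.add_apply, Matrix.smul_apply, Matrix.diagonal_apply, smul_eq_mul, vt]
  split
  · split <;> ring
  · ring

lemma vmv_decomp {K L : ℕ} (c₁ c₂ e₁ e₂ : ℝ) :
    Matrix.vecMulVec (vt K L c₁ c₂) (vt K L e₁ e₂) =
      (c₁*e₁) • E11 K L + (c₁*e₂) • E12 K L + (c₂*e₁) • E21 K L + (c₂*e₂) • E22 K L := by
  ext i j
  simp only [E11, E12, E21, E22, Matrix.add_apply, Matrix.smul_apply,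
    Matrix.vecMulVec_apply, smul_eq_mul, vt]
  split <;> split <;> ring

lemma one_decomp {K L : ℕ} : (1 : Matrix (Fin K) (Fin K) ℝ) = D1 K L + D2 K L := by
  have h : vt K L 1 1 = fun _ => (1:ℝ) := funext fun i => by simp [vt]
  rw [← Matrix.diagonal_one, ← h, diag_decomp]; simp

lemma indL_eq (K L : ℕ) : indL K L = vt K L 1 0 := rfl
lemma indU_eq (K L : ℕ) : indU K L = vt K L 0 1 := rfl

/-! key matrices -/
def P1m (K L : ℕ) : Matrix (Fin K) (Fin K) ℝ :=
  Matrix.diagonal (indL K L) - ((L : ℝ))⁻¹ • Matrix.vecMulVec (indL K L) (indL K L)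
def P2m (K L : ℕ) : Matrix (Fin K) (Fin K) ℝ :=
  Matrix.diagonal (indU K L) - ((K : ℝ) - L)⁻¹ • Matrix.vecMulVec (indU K L) (indU K L)
def Amat (K L : ℕ) (a b : ℝ) : Matrix (Fin K) (Fin K) ℝ :=
  ((K:ℝ))⁻¹ • Matrix.vecMulVec (vt K L 1 1) (vt K L a b) - Matrix.diagonal (vt K L a b)
def Mmat (K L : ℕ) (a b : ℝ) : Matrix (Fin K) (Fin K) ℝ :=
  Matrix.diagonal (vt K L (a^2) (b^2)) - ((K:ℝ))⁻¹ • Matrix.vecMulVec (vt K L a b) (vt K L a b)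
def zvec (K L : ℕ) (a b : ℝ) : Fin K → ℝ := vt K L (a*((K:ℝ)-L)) (-(b*L))
def uvec (K L : ℕ) : Fin K → ℝ := vt K L ((K:ℝ)-L) (-(L:ℝ))
def Qmat (K L : ℕ) (a b : ℝ) : Matrix (Fin K) (Fin K) ℝ :=
  Matrix.vecMulVec (uvec K L) (zvec K L a b)
def Zmat (K L : ℕ) (a b : ℝ) : Matrix (Fin K) (Fin K) ℝ :=
  Matrix.vecMulVec (zvec K L a b) (zvec K L a b)

lemma diag_mul_diag' {K L : ℕ} (c₁ c₂ e₁ e₂ : ℝ) :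
    Matrix.diagonal (vt K L c₁ c₂) * Matrix.diagonal (vt K L e₁ e₂) =
      Matrix.diagonal (vt K L (c₁*e₁) (c₂*e₂)) := by
  rw [Matrix.diagonal_mul_diagonal, ← vt.mul_vt]; rfl

section ids
variable {K L : ℕ} {a b : ℝ}

lemma cast_ne₀ (hLK : L < K) (hL : 0 < L) :
    ((L:ℝ) ≠ 0) ∧ ((K:ℝ) ≠ 0) ∧ ((K:ℝ) - L ≠ 0) := by
  refine ⟨Nat.cast_ne_zero.mpr hL.ne', Nat.cast_ne_zero.mpr (by omega), ?_⟩
  have : (L:ℝ) < K := by exact_mod_cast hLK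
  linarith

lemma hAtA (hLK : L < K) (hL : 0 < L) :
    (Amat K L a b)ᵀ * Amat K L a b = Mmat K L a b := by
  obtain ⟨hL0, hK0, hU0⟩ := cast_ne₀ hLK hL
  have hLK' : L ≤ K := hLK.le
  simp only [Amat, Mmat, transpose_sub, transpose_smul, Matrix.vmv_transpose,
    Matrix.diagonal_transpose, Matrix.sub_mul, Matrix.mul_sub, Matrix.smul_mul,
    Matrix.mul_smul, Matrix.vmv_mul_vmv, Matrix.diag_mul_vmv, Matrix.vmv_mul_diag,
    diag_mul_diag', vt.mul_vt, vt.dot_vt _ _ _ _ hLK', smul_smul]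
  simp only [diag_decomp, vmv_decomp]
  match_scalars <;> field_simp <;> ring

end ids

lemma smul_vmv_right {K : ℕ} (w v : Fin K → ℝ) (c : ℝ) :
    c • Matrix.vecMulVec w v = Matrix.vecMulVec w (c • v) := by
  ext i j; simp [Matrix.vecMulVec_apply]; ring

lemma vmv_sub_smul {K : ℕ} (w x y : Fin K → ℝ) (c : ℝ) :
    Matrix.vecMulVec w x - c • Matrix.vecMulVec w y = Matrix.vecMulVec w (x - c • y) := by
  ext i j; simp [Matrix.vecMulVec_apply]; ring

lemma hA (hLK : L < K) (hL : 0 < L) :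
    Amat K L a b = (-a) • P1m K L + (-b) • P2m K L
      + (-(((L:ℝ) * ((K:ℝ)-L) * K)⁻¹)) • Qmat K L a b := by
  obtain ⟨hL0, hK0, hU0⟩ := cast_ne₀ hLK hL
  simp only [Amat, P1m, P2m, Qmat, uvec, zvec, indL_eq, indU_eq, smul_sub, smul_smul]
  simp only [diag_decomp, vmv_decomp]
  match_scalars <;> field_simp <;> ring

lemma hM (hLK : L < K) (hL : 0 < L) :
    Mmat K L a b = (a^2) • P1m K L + (b^2) • P2m K L
      + (((L:ℝ) * ((K:ℝ)-L) * K)⁻¹) • Zmat K L a b := by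
  obtain ⟨hL0, hK0, hU0⟩ := cast_ne₀ hLK hL
  simp only [Mmat, P1m, P2m, Zmat, zvec, indL_eq, indU_eq, smul_sub, smul_smul]
  simp only [diag_decomp, vmv_decomp]
  match_scalars <;> field_simp <;> ring

lemma hP1M (hLK : L < K) (hL : 0 < L) :
    P1m K L * Mmat K L a b = (a^2) • P1m K L := by
  obtain ⟨hL0, hK0, hU0⟩ := cast_ne₀ hLK hL
  have hLK' : L ≤ K := hLK.le
  simp only [P1m, Mmat, indL_eq, smul_sub, smul_smul, Matrix.sub_mul, Matrix.mul_sub,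
    Matrix.smul_mul, Matrix.mul_smul, Matrix.vmv_mul_vmv, Matrix.diag_mul_vmv,
    Matrix.vmv_mul_diag, diag_mul_diag', vt.mul_vt, vt.dot_vt _ _ _ _ hLK']
  simp only [diag_decomp, vmv_decomp]
  match_scalars <;> field_simp <;> ring

lemma hP2M (hLK : L < K) (hL : 0 < L) :
    P2m K L * Mmat K L a b = (b^2) • P2m K L := by
  obtain ⟨hL0, hK0, hU0⟩ := cast_ne₀ hLK hL
  have hLK' : L ≤ K := hLK.le
  simp only [P2m, Mmat, indU_eq, smul_sub, smul_smul, Matrix.sub_mul, Matrix.mul_sub,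
    Matrix.smul_mul, Matrix.mul_smul, Matrix.vmv_mul_vmv, Matrix.diag_mul_vmv,
    Matrix.vmv_mul_diag, diag_mul_diag', vt.mul_vt, vt.dot_vt _ _ _ _ hLK']
  simp only [diag_decomp, vmv_decomp]
  match_scalars <;> field_simp <;> ring

lemma hwZM (hLK : L < K) (hL : 0 < L) (w : Fin K → ℝ) :
    Matrix.vecMulVec w (zvec K L a b) * Mmat K L a b
      = ((a^2*((K:ℝ)-L) + b^2*L)/K) • Matrix.vecMulVec w (zvec K L a b) := by
  obtain ⟨hL0, hK0, hU0⟩ := cast_ne₀ hLK hL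
  have hLK' : L ≤ K := hLK.le
  simp only [Mmat, zvec, Matrix.mul_sub, Matrix.mul_smul, Matrix.vmv_mul_vmv,
    Matrix.vmv_mul_diag, vt.mul_vt, vt.dot_vt _ _ _ _ hLK', smul_smul]
  rw [vmv_sub_smul, smul_vmv_right]
  refine congrArg (Matrix.vecMulVec w) ?_
  funext i
  simp only [vt, Pi.sub_apply, Pi.smul_apply, smul_eq_mul]
  split <;> field_simp <;> ring

lemma hQM (hLK : L < K) (hL : 0 < L) :
    Qmat K L a b * Mmat K L a b = ((a^2*((K:ℝ)-L) + b^2*L)/K) • Qmat K L a b :=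
  hwZM hLK hL _

lemma hZM (hLK : L < K) (hL : 0 < L) :
    Zmat K L a b * Mmat K L a b = ((a^2*((K:ℝ)-L) + b^2*L)/K) • Zmat K L a b :=
  hwZM hLK hL _



section pows
variable {K L : ℕ} {a b : ℝ}

lemma hAM (hLK : L < K) (hL : 0 < L) :
    Amat K L a b * Mmat K L a b = (-(a^3)) • P1m K L + (-(b^3)) • P2m K L
      + (-(((L:ℝ) * ((K:ℝ)-L) * K)⁻¹ * ((a^2*((K:ℝ)-L) + b^2*L)/K))) • Qmat K L a b := by
  rw [hA hLK hL, Matrix.add_mul, Matrix.add_mul, Matrix.smul_mul, Matrix.smul_mul,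
    Matrix.smul_mul, hP1M hLK hL, hP2M hLK hL, hQM hLK hL]
  match_scalars <;> ring

lemma hAM2 (hLK : L < K) (hL : 0 < L) :
    Amat K L a b * (Mmat K L a b * Mmat K L a b)
      = (-(a^5)) • P1m K L + (-(b^5)) • P2m K L
      + (-(((L:ℝ) * ((K:ℝ)-L) * K)⁻¹ * ((a^2*((K:ℝ)-L) + b^2*L)/K)^2)) • Qmat K L a b := by
  rw [← Matrix.mul_assoc, hAM hLK hL, Matrix.add_mul, Matrix.add_mul, Matrix.smul_mul,
    Matrix.smul_mul, Matrix.smul_mul, hP1M hLK hL, hP2M hLK hL, hQM hLK hL]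
  match_scalars <;> ring

lemma hM2 (hLK : L < K) (hL : 0 < L) :
    Mmat K L a b * Mmat K L a b = (a^4) • P1m K L + (b^4) • P2m K L
      + (((L:ℝ) * ((K:ℝ)-L) * K)⁻¹ * ((a^2*((K:ℝ)-L) + b^2*L)/K)) • Zmat K L a b := by
  nth_rewrite 1 [hM hLK hL]
  rw [Matrix.add_mul, Matrix.add_mul, Matrix.smul_mul, Matrix.smul_mul, Matrix.smul_mul,
    hP1M hLK hL, hP2M hLK hL, hZM hLK hL]
  match_scalars <;> ring

lemma hM3 (hLK : L < K) (hL : 0 < L) :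
    Mmat K L a b * Mmat K L a b * Mmat K L a b = (a^6) • P1m K L + (b^6) • P2m K L
      + (((L:ℝ) * ((K:ℝ)-L) * K)⁻¹ * ((a^2*((K:ℝ)-L) + b^2*L)/K)^2) • Zmat K L a b := by
  rw [hM2 hLK hL, Matrix.add_mul, Matrix.add_mul, Matrix.smul_mul, Matrix.smul_mul,
    Matrix.smul_mul, hP1M hLK hL, hP2M hLK hL, hZM hLK hL]
  match_scalars <;> ring

lemma hM4 (hLK : L < K) (hL : 0 < L) :
    Mmat K L a b * Mmat K L a b * Mmat K L a b * Mmat K L a b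
      = (a^8) • P1m K L + (b^8) • P2m K L
      + (((L:ℝ) * ((K:ℝ)-L) * K)⁻¹ * ((a^2*((K:ℝ)-L) + b^2*L)/K)^3) • Zmat K L a b := by
  rw [hM3 hLK hL, Matrix.add_mul, Matrix.add_mul, Matrix.smul_mul, Matrix.smul_mul,
    Matrix.smul_mul, hP1M hLK hL, hP2M hLK hL, hZM hLK hL]
  match_scalars <;> ring

/-- annihilating quartic relation for `M` -/
lemma hMr (hLK : L < K) (hL : 0 < L) :
    Mmat K L a b * Mmat K L a b * Mmat K L a b * Mmat K L a b
      = (a^2 + b^2 + (a^2*((K:ℝ)-L) + b^2*L)/K) • (Mmat K L a b * Mmat K L a b * Mmat K L a b)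
      - (a^2*b^2 + (a^2 + b^2) * ((a^2*((K:ℝ)-L) + b^2*L)/K)) • (Mmat K L a b * Mmat K L a b)
      + (a^2*b^2*((a^2*((K:ℝ)-L) + b^2*L)/K)) • Mmat K L a b := by
  rw [hM4 hLK hL, hM3 hLK hL, hM2 hLK hL, hM hLK hL]
  match_scalars <;> ring

/-- the Muon output of `A·(c₀ + c₁ M + c₂ M²)` -/
lemma hAq (hLK : L < K) (hL : 0 < L) (c₀ c₁ c₂ si : ℝ)
    (hga : a * (c₀ + c₁*a^2 + c₂*a^4) = 1)
    (hgb : b * (c₀ + c₁*b^2 + c₂*b^4) = 1)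
    (hgs : c₀ + c₁*((a^2*((K:ℝ)-L) + b^2*L)/K) + c₂*((a^2*((K:ℝ)-L) + b^2*L)/K)^2 = si) :
    Amat K L a b * (c₀ • 1 + c₁ • Mmat K L a b + c₂ • (Mmat K L a b * Mmat K L a b))
      = -(P1m K L + P2m K L + (((L:ℝ) * ((K:ℝ)-L) * K)⁻¹ * si) • Qmat K L a b) := by
  rw [Matrix.mul_add, Matrix.mul_add, Matrix.mul_smul, Matrix.mul_smul, Matrix.mul_smul,
    Matrix.mul_one, hAM hLK hL, hAM2 hLK hL]
  nth_rewrite 1 [hA hLK hL]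
  match_scalars
  · linear_combination -hga
  · linear_combination -hgb
  · linear_combination -((L:ℝ) * ((K:ℝ)-L) * K)⁻¹ * hgs
end pows
lemma mconj_mul {K : ℕ} (V X Y : Matrix (Fin K) (Fin K) ℝ) (hV : Vᵀ * V = 1) :
    (V * X * Vᵀ) * (V * Y * Vᵀ) = V * (X * Y) * Vᵀ := by
  simp only [Matrix.mul_assoc]
  rw [← Matrix.mul_assoc Vᵀ V (Y * Vᵀ), hV, Matrix.one_mul]

lemma munconj {K : ℕ} (V X : Matrix (Fin K) (Fin K) ℝ) (hV : Vᵀ * V = 1) :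
    Vᵀ * (V * X * Vᵀ) * V = X := by
  have h : Vᵀ * (V * X * Vᵀ) * V = (Vᵀ * V) * (X * (Vᵀ * V)) := by
    simp only [Matrix.mul_assoc]
  rw [h, hV, Matrix.one_mul, Matrix.mul_one]

lemma svd_gtg {K : ℕ} {G U : Matrix (Fin K) (Fin K) ℝ} {d : Fin K → ℝ}
    {V : Matrix (Fin K) (Fin K) ℝ} (h : IsSVD G U d V) :
    Gᵀ * G = V * Matrix.diagonal (fun i => d i ^ 2) * Vᵀ := by
  obtain ⟨hU1, hU2, hV1, hV2, hd, hG⟩ := h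
  rw [hG]
  rw [Matrix.transpose_mul, Matrix.transpose_mul, Matrix.transpose_transpose,
    Matrix.diagonal_transpose]
  have : Vᵀᵀ = V := Matrix.transpose_transpose V
  simp only [Matrix.mul_assoc]
  rw [← Matrix.mul_assoc Uᵀ U _, hU1, Matrix.one_mul, ← Matrix.mul_assoc (Matrix.diagonal d),
    Matrix.diagonal_mul_diagonal]
  congr 2
  funext i; ring

/-- From a quartic relation on `GᵀG`, each `d i ^ 2` satisfies the quartic. -/
lemma svd_quartic {K : ℕ} {G U : Matrix (Fin K) (Fin K) ℝ} {d : Fin K → ℝ}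
    {V : Matrix (Fin K) (Fin K) ℝ} (h : IsSVD G U d V) (e1 e2 e3 : ℝ)
    (hrel : Gᵀ*G * (Gᵀ*G) * (Gᵀ*G) * (Gᵀ*G)
      = e1 • (Gᵀ*G * (Gᵀ*G) * (Gᵀ*G)) - e2 • (Gᵀ*G * (Gᵀ*G)) + e3 • (Gᵀ*G)) :
    ∀ i, (d i^2)^4 = e1*(d i^2)^3 - e2*(d i^2)^2 + e3*(d i^2) := by
  intro i
  obtain ⟨hU1, hU2, hV1, hV2, hd, hG⟩ := h
  have hN := svd_gtg ⟨hU1, hU2, hV1, hV2, hd, hG⟩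
  set D := Matrix.diagonal (fun i => d i ^ 2) with hD
  rw [hN, mconj_mul V _ _ hV1, mconj_mul V _ _ hV1, mconj_mul V _ _ hV1] at hrel
  have h2 := congrArg (fun B => Vᵀ * B * V) hrel
  simp only [Matrix.mul_sub, Matrix.sub_mul, Matrix.mul_add, Matrix.add_mul,
    Matrix.mul_smul, Matrix.smul_mul, munconj V _ hV1] at h2
  have h3 := congrFun (congrFun h2 i) i
  simp only [hD, Matrix.diagonal_mul_diagonal, Matrix.sub_apply, Matrix.add_apply,
    Matrix.smul_apply, Matrix.diagonal_apply_eq, smul_eq_mul] at h3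
  linear_combination h3

lemma muon_poly {K : ℕ} {G U : Matrix (Fin K) (Fin K) ℝ} {d : Fin K → ℝ}
    {V : Matrix (Fin K) (Fin K) ℝ} (h : IsSVD G U d V) (c₀ c₁ c₂ : ℝ)
    (hq : ∀ i, (if d i = 0 then (0:ℝ) else 1) = d i * (c₀ + c₁ * d i ^ 2 + c₂ * (d i ^ 2)^2)) :
    muonOf U d V = G * (c₀ • 1 + c₁ • (Gᵀ*G) + c₂ • (Gᵀ*G * (Gᵀ*G))) := by
  obtain ⟨hU1, hU2, hV1, hV2, hd, hG⟩ := h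
  have hN := svd_gtg ⟨hU1, hU2, hV1, hV2, hd, hG⟩
  have key : c₀ • (1 : Matrix (Fin K) (Fin K) ℝ) + c₁ • (Gᵀ*G) + c₂ • (Gᵀ*G * (Gᵀ*G))
      = V * Matrix.diagonal (fun i => c₀ + c₁ * d i ^ 2 + c₂ * (d i ^ 2)^2) * Vᵀ := by
    rw [hN, mconj_mul V _ _ hV1, Matrix.diagonal_mul_diagonal]
    have e : ∀ (c : ℝ) (X : Matrix (Fin K) (Fin K) ℝ),
        c • ((V * X) * Vᵀ) = V * (c • X) * Vᵀ := fun c X => by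
      rw [Matrix.mul_smul, Matrix.smul_mul]
    have e0 : c₀ • (1 : Matrix (Fin K) (Fin K) ℝ) = V * (c₀ • 1) * Vᵀ := by
      rw [← e c₀ 1, Matrix.mul_one, hV2]
    have eadd : ∀ (X Y : Matrix (Fin K) (Fin K) ℝ),
        V * X * Vᵀ + V * Y * Vᵀ = V * (X + Y) * Vᵀ := fun X Y => by
      rw [← Matrix.add_mul, ← Matrix.mul_add]
    rw [e0, e, e, eadd, eadd]
    congr 2
    ext i j
    rcases eq_or_ne i j with hij | hij
    · subst hij
      simp only [Matrix.add_apply, Matrix.smul_apply, Matrix.diagonal_apply_eq,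
        Matrix.one_apply_eq, smul_eq_mul]
      ring
    · simp only [Matrix.add_apply, Matrix.smul_apply, Matrix.diagonal_apply_ne _ hij,
        Matrix.one_apply_ne hij, smul_eq_mul]
      ring
  rw [key, hG]
  rw [muonOf]
  simp only [Matrix.mul_assoc]
  rw [← Matrix.mul_assoc Vᵀ V _, hV1, Matrix.one_mul,
    ← Matrix.mul_assoc (Matrix.diagonal d) (Matrix.diagonal _) Vᵀ,
    Matrix.diagonal_mul_diagonal]
  rw [show (fun i => if d i = 0 then (0:ℝ) else 1)
      = (fun i => d i * (c₀ + c₁ * d i ^ 2 + c₂ * (d i ^ 2)^2)) from funext hq]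
def entryLM {K : ℕ} (Et Ee : Matrix (Fin K) (Fin K) ℝ) (k' k : Fin K) :
    Matrix (Fin K) (Fin K) ℝ →ₗ[ℝ] ℝ where
  toFun W := (Etᵀ * W * Ee) k' k
  map_add' W₁ W₂ := by simp [Matrix.mul_add, Matrix.add_mul]
  map_smul' c W := by simp [Matrix.mul_smul, Matrix.smul_mul]

def entryCLM {K : ℕ} (Et Ee : Matrix (Fin K) (Fin K) ℝ) (k' k : Fin K) :
    Matrix (Fin K) (Fin K) ℝ →L[ℝ] ℝ :=
  LinearMap.toContinuousLinearMap (entryLM Et Ee k' k)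

@[simp] lemma entryCLM_apply {K : ℕ} (Et Ee : Matrix (Fin K) (Fin K) ℝ) (k' k : Fin K)
    (W : Matrix (Fin K) (Fin K) ℝ) : entryCLM Et Ee k' k W = (Etᵀ * W * Ee) k' k := rfl

lemma ploss_hasFDerivAt {K : ℕ} (hK : 0 < K) (L : ℕ) (α : ℝ)
    (Et Ee : Matrix (Fin K) (Fin K) ℝ) :
    HasFDerivAt (ploss L α Et Ee)
      (-(∑ k : Fin K, pclass K L α k •
        (entryCLM Et Ee k k - ((K:ℝ))⁻¹ • ∑ k' : Fin K, entryCLM Et Ee k' k))) 0 := by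
  have key : ∀ k' k : Fin K, HasFDerivAt (fun W : Matrix (Fin K) (Fin K) ℝ =>
      (Etᵀ * W * Ee) k' k) (entryCLM Et Ee k' k) (0 : Matrix (Fin K) (Fin K) ℝ) :=
    fun k' k => (entryCLM Et Ee k' k).hasFDerivAt
  have h0 : ∀ k' k : Fin K, (Etᵀ * (0 : Matrix (Fin K) (Fin K) ℝ) * Ee) k' k = 0 := by
    intro k' k; simp
  have hS : ∀ k : Fin K, HasFDerivAt (fun W : Matrix (Fin K) (Fin K) ℝ =>
      ∑ k' : Fin K, Real.exp ((Etᵀ * W * Ee) k' k))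
      (∑ k' : Fin K, entryCLM Et Ee k' k) (0 : Matrix (Fin K) (Fin K) ℝ) := by
    intro k
    have := HasFDerivAt.fun_sum (fun (k' : Fin K) (_ : k' ∈ Finset.univ) => (key k' k).exp)
    simp only [h0, Real.exp_zero] at this
    exact this.congr_fderiv (Finset.sum_congr rfl fun _ _ => one_smul _ _)
  have hSpos : ∀ (W : Matrix (Fin K) (Fin K) ℝ) (k : Fin K),
      0 < ∑ k' : Fin K, Real.exp ((Etᵀ * W * Ee) k' k) := by
    intro W k
    exact Finset.sum_pos (fun i _ => Real.exp_pos _) ⟨⟨0, hK⟩, Finset.mem_univ _⟩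
  have hlog : ∀ k : Fin K, HasFDerivAt (fun W : Matrix (Fin K) (Fin K) ℝ =>
      Real.log (∑ k' : Fin K, Real.exp ((Etᵀ * W * Ee) k' k)))
      (((K:ℝ))⁻¹ • ∑ k' : Fin K, entryCLM Et Ee k' k) (0 : Matrix (Fin K) (Fin K) ℝ) := by
    intro k
    have := (hS k).log (ne_of_gt (hSpos 0 k))
    have hval : (∑ k' : Fin K, Real.exp ((Etᵀ * (0 : Matrix (Fin K) (Fin K) ℝ) * Ee) k' k))
        = (K : ℝ) := by simp [h0]
    rwa [hval] at this
  have hterm : ∀ k : Fin K, HasFDerivAt (fun W : Matrix (Fin K) (Fin K) ℝ =>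
      Real.log (prob Et Ee W k k))
      (entryCLM Et Ee k k - ((K:ℝ))⁻¹ • ∑ k' : Fin K, entryCLM Et Ee k' k)
      (0 : Matrix (Fin K) (Fin K) ℝ) := by
    intro k
    have heq : (fun W : Matrix (Fin K) (Fin K) ℝ => Real.log (prob Et Ee W k k))
        = fun W => (Etᵀ * W * Ee) k k
            - Real.log (∑ k' : Fin K, Real.exp ((Etᵀ * W * Ee) k' k)) := by
      funext W
      rw [prob, Real.log_div (Real.exp_ne_zero _) (ne_of_gt (hSpos W k)), Real.log_exp]
    rw [heq]
    exact (key k k).sub (hlog k)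
  have : HasFDerivAt (fun W => ∑ k : Fin K, pclass K L α k * Real.log (prob Et Ee W k k))
      (∑ k : Fin K, pclass K L α k •
        (entryCLM Et Ee k k - ((K:ℝ))⁻¹ • ∑ k' : Fin K, entryCLM Et Ee k' k))
      (0 : Matrix (Fin K) (Fin K) ℝ) :=
    HasFDerivAt.fun_sum (fun k _ => (hterm k).const_mul (pclass K L α k))
  exact this.neg

lemma pclass_eq (K L : ℕ) (α : ℝ) :
    pclass K L α = vt K L (α / (L:ℝ)) ((1 - α) / ((K:ℝ) - L)) := rfl

lemma trace_form {K L : ℕ} (a b : ℝ) (X : Matrix (Fin K) (Fin K) ℝ) :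
    Matrix.trace (X * (Amat K L a b)ᵀ)
      = -∑ k, vt K L a b k * (X k k - ((K:ℝ))⁻¹ * ∑ k', X k' k) := by
  have h1 : X * (Amat K L a b)ᵀ
      = ((K:ℝ))⁻¹ • (X * Matrix.vecMulVec (vt K L a b) (vt K L 1 1))
        - X * Matrix.diagonal (vt K L a b) := by
    rw [Amat, Matrix.transpose_sub, Matrix.transpose_smul, Matrix.vmv_transpose,
      Matrix.diagonal_transpose, Matrix.mul_sub, Matrix.mul_smul]
  rw [h1, Matrix.trace_sub, Matrix.trace_smul]
  have h2 : Matrix.trace (X * Matrix.vecMulVec (vt K L a b) (vt K L 1 1))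
      = ∑ k', ∑ k, X k k' * vt K L a b k' := by
    rw [Matrix.trace]
    simp only [Matrix.diag_apply, Matrix.mul_apply, Matrix.vecMulVec_apply]
    rw [Finset.sum_comm]
    refine Finset.sum_congr rfl fun k' _ => Finset.sum_congr rfl fun k _ => ?_
    have : vt K L 1 1 k = 1 := by simp [vt]
    rw [this]; ring
  have h3 : Matrix.trace (X * Matrix.diagonal (vt K L a b)) = ∑ k, X k k * vt K L a b k := by
    rw [Matrix.trace]
    simp only [Matrix.diag_apply, Matrix.mul_diagonal]
  rw [h2, h3, smul_eq_mul, Finset.mul_sum, ← Finset.sum_sub_distrib, ← Finset.sum_neg_distrib]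
  refine Finset.sum_congr rfl fun k _ => ?_
  rw [← Finset.sum_mul]
  ring

lemma grad_eq {K L : ℕ} (hK : 0 < K) (α : ℝ) (Et Ee G : Matrix (Fin K) (Fin K) ℝ)
    (hG : IsGradientAt (ploss L α Et Ee) G 0) :
    G = Et * Amat K L (α / (L:ℝ)) ((1 - α) / ((K:ℝ) - (L:ℝ))) * Eeᵀ := by
  obtain ⟨l, hl, hlG⟩ := hG
  have h0 : l = -(∑ k : Fin K, pclass K L α k •
      (entryCLM Et Ee k k - ((K:ℝ))⁻¹ • ∑ k' : Fin K, entryCLM Et Ee k' k)) :=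
    hl.unique (ploss_hasFDerivAt hK L α Et Ee)
  set G₀ := Et * Amat K L (α / (L:ℝ)) ((1 - α) / ((K:ℝ) - (L:ℝ))) * Eeᵀ with hG₀
  have key : ∀ H, Matrix.trace (Gᵀ * H) = Matrix.trace (G₀ᵀ * H) := by
    intro H
    rw [← hlG H, h0]
    have hT : Matrix.trace (G₀ᵀ * H)
        = Matrix.trace ((Etᵀ * H * Ee) * (Amat K L (α / (L:ℝ)) ((1 - α) / ((K:ℝ) - (L:ℝ))))ᵀ) := by
      rw [hG₀]
      have e1 : (Et * Amat K L (α / (L:ℝ)) ((1 - α) / ((K:ℝ) - (L:ℝ))) * Eeᵀ)ᵀ * H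
          = Ee * ((Amat K L (α / (L:ℝ)) ((1 - α) / ((K:ℝ) - (L:ℝ))))ᵀ * (Etᵀ * H)) := by
        simp only [Matrix.transpose_mul, Matrix.transpose_transpose, Matrix.mul_assoc]
      rw [e1, Matrix.trace_mul_comm]
      rw [show ((Amat K L (α / (L:ℝ)) ((1 - α) / ((K:ℝ) - (L:ℝ))))ᵀ * (Etᵀ * H)) * Ee
          = (Amat K L (α / (L:ℝ)) ((1 - α) / ((K:ℝ) - (L:ℝ))))ᵀ * (Etᵀ * H * Ee) from by
        simp only [Matrix.mul_assoc]]
      rw [Matrix.trace_mul_comm]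
    rw [hT, trace_form]
    simp only [ContinuousLinearMap.neg_apply, ContinuousLinearMap.coe_sum',
      Finset.sum_apply, ContinuousLinearMap.smul_apply, ContinuousLinearMap.sub_apply,
      ContinuousLinearMap.coe_smul', Pi.smul_apply, entryCLM_apply, smul_eq_mul,
      pclass_eq]
  have hdiff : ∀ H, Matrix.trace ((Gᵀ - G₀ᵀ) * H) = 0 := by
    intro H
    rw [Matrix.sub_mul, Matrix.trace_sub, key H, sub_self]
  ext i j
  have h := hdiff (Matrix.single i j 1)
  rw [Matrix.trace] at h
  simp only [Matrix.diag_apply, Matrix.mul_apply, Matrix.sub_apply, Matrix.transpose_apply,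
    Matrix.single, Matrix.of_apply, mul_ite, mul_one, mul_zero, ite_and,
    Finset.sum_ite_eq, Finset.mem_univ, if_true] at h
  exact sub_eq_zero.mp h

lemma lagrange3 (x1 x2 x3 y1 y2 y3 : ℝ) (h12 : x1 ≠ x2) (h13 : x1 ≠ x3) (h23 : x2 ≠ x3) :
    ∃ c₀ c₁ c₂ : ℝ, (c₀ + c₁*x1 + c₂*x1^2 = y1) ∧ (c₀ + c₁*x2 + c₂*x2^2 = y2)
      ∧ (c₀ + c₁*x3 + c₂*x3^2 = y3) := by
  have d12 : x2 - x1 ≠ 0 := sub_ne_zero.mpr (Ne.symm h12)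
  have d13 : x3 - x1 ≠ 0 := sub_ne_zero.mpr (Ne.symm h13)
  have d23 : x3 - x2 ≠ 0 := sub_ne_zero.mpr (Ne.symm h23)
  set c2 := ((y3-y1)/(x3-x1) - (y2-y1)/(x2-x1))/(x3-x2) with hc2
  set c1 := (y2-y1)/(x2-x1) - c2*(x1+x2) with hc1
  refine ⟨y1 - c1*x1 - c2*x1^2, c1, c2, by ring, ?_, ?_⟩
  · rw [hc1]; field_simp; ring
  · rw [hc1, hc2]; field_simp; ring

lemma scalar_exists (a b s t : ℝ) (ha : 0 < a) (hb : 0 < b) (hs : 0 < s)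
    (ht : t = Real.sqrt s) (hsab : a = b → s = a^2) (hsa : s = a^2 → a = b)
    (hsb : s = b^2 → a = b) :
    ∃ c₀ c₁ c₂ : ℝ, a*(c₀ + c₁*a^2 + c₂*a^4) = 1 ∧ b*(c₀ + c₁*b^2 + c₂*b^4) = 1
      ∧ t*(c₀ + c₁*t^2 + c₂*t^4) = 1 := by
  have ht2 : t^2 = s := by rw [ht]; exact Real.sq_sqrt hs.le
  have htpos : 0 < t := by rw [ht]; exact Real.sqrt_pos.mpr hs
  by_cases hab : a = b
  · refine ⟨a⁻¹, 0, 0, by field_simp; ring, by rw [← hab]; field_simp; ring, ?_⟩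
    have hta : t = a := by
      rw [ht, hsab hab, Real.sqrt_sq ha.le]
    rw [hta]; field_simp; ring
  · have h12 : a^2 ≠ b^2 := by
      intro h
      rcases mul_eq_zero.mp (show (a-b)*(a+b) = 0 by linear_combination h) with h' | h'
      · exact hab (by linarith)
      · linarith
    have h13 : a^2 ≠ s := fun h => hab (hsa h.symm)
    have h23 : b^2 ≠ s := fun h => hab (hsb h.symm)
    obtain ⟨c₀, c₁, c₂, e1, e2, e3⟩ := lagrange3 (a^2) (b^2) s a⁻¹ b⁻¹ t⁻¹ h12 h13 h23
    refine ⟨c₀, c₁, c₂, ?_, ?_, ?_⟩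
    · have : a * (c₀ + c₁*a^2 + c₂*a^4) = a * a⁻¹ := by linear_combination a * e1
      rwa [mul_inv_cancel₀ ha.ne'] at this
    · have : b * (c₀ + c₁*b^2 + c₂*b^4) = b * b⁻¹ := by linear_combination b * e2
      rwa [mul_inv_cancel₀ hb.ne'] at this
    · have : t * (c₀ + c₁*t^2 + c₂*t^4) = t * t⁻¹ := by
        linear_combination t * e3 + (c₁*t + c₂*t^3 + c₂*t*s) * ht2
      rwa [mul_inv_cancel₀ htpos.ne'] at this

/-- Explicit formula for the Muon update at `W₀ = 0`.  Submatrices of columns are encoded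
by right-multiplication with the diagonal indicator matrices: e.g.
`Ẽ_{1:L} M E_{1:L}ᵀ = Ẽ (ι M ιᵀ) Eᵀ` where `ι` embeds the first `L` coordinates, so that
`Ẽ_{1:L}(I_L - (1/L)J_{L,L})E_{1:L}ᵀ = Ẽ (diag(χ_L) - (1/L)·χ_Lχ_Lᵀ) Eᵀ`,
`Ẽ_{1:L}𝟙_L = Ẽ *ᵥ χ_L`, etc. -/
theorem stmt3 {K : ℕ} (hK : 2 ≤ K) (Et Ee : Matrix (Fin K) (Fin K) ℝ)
    (hEe : Eeᵀ * Ee = 1) (hEt : Etᵀ * Et = 1)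
    (α β : ℝ) (hα : α ∈ Set.Ioo (0:ℝ) 1) (hβ : β ∈ Set.Ioo (0:ℝ) 1)
    (L : ℕ) (hLβ : (L : ℝ) = β * K) (hL1 : 1 ≤ L) (hLK : L ≤ K - 1)
    (G : Matrix (Fin K) (Fin K) ℝ) (hG : IsGradientAt (ploss L α Et Ee) G 0)
    (U : Matrix (Fin K) (Fin K) ℝ) (d : Fin K → ℝ) (V : Matrix (Fin K) (Fin K) ℝ)
    (hsvd : IsSVD G U d V) :
    muonOf U d V =
      -(Et * (Matrix.diagonal (indL K L)
            - ((L : ℝ))⁻¹ • vecMulVec (indL K L) (indL K L)) * Eeᵀ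
        + Et * (Matrix.diagonal (indU K L)
            - ((K : ℝ) - L)⁻¹ • vecMulVec (indU K L) (indU K L)) * Eeᵀ
        + (Real.sqrt ((K : ℝ) * (α ^ 2 * ((K : ℝ) - L) ^ 3 + (1 - α) ^ 2 * (L : ℝ) ^ 3)))⁻¹ •
            vecMulVec
              (Et *ᵥ fun i => if (i : ℕ) < L then (K : ℝ) - L else -(L : ℝ))
              (Ee *ᵥ fun i => if (i : ℕ) < L then ((K : ℝ) - L) * α / L
                else -((L : ℝ) * (1 - α) / ((K : ℝ) - L)))) := by
  classical
  have hK0 : 0 < K := by omega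
  have hLltK : L < K := by omega
  have hL0 : 0 < L := hL1
  have hLr : (0:ℝ) < L := by exact_mod_cast hL0
  have hKr : (0:ℝ) < K := by exact_mod_cast hK0
  have hLKr : (L:ℝ) < K := by exact_mod_cast hLltK
  have hUr : (0:ℝ) < (K:ℝ) - L := by linarith
  set a := α / (L:ℝ) with ha_def
  set b := (1 - α) / ((K:ℝ) - L) with hb_def
  have ha : 0 < a := div_pos hα.1 hLr
  have hb : 0 < b := div_pos (by linarith [hα.2]) hUr
  set s := (a^2*((K:ℝ)-L) + b^2*(L:ℝ))/(K:ℝ) with hs_def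
  have hs : 0 < s := by
    have h1 := mul_pos (pow_pos ha 2) hUr
    have h2 := mul_pos (pow_pos hb 2) hLr
    exact div_pos (by linarith) hKr
  set t := Real.sqrt s with ht_def
  have ht : 0 < t := Real.sqrt_pos.mpr hs
  have ht2 : t^2 = s := Real.sq_sqrt hs.le
  -- degenerate-case helpers
  have hsab : a = b → s = a^2 := by
    intro h
    rw [hs_def, ← h]
    field_simp
    ring
  have hsa : s = a^2 → a = b := by
    intro h
    rw [hs_def] at h
    have h1 : a^2*((K:ℝ)-L) + b^2*L = a^2*K := by
      field_simp at h; linarith [h]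
    have h2 : b^2 = a^2 := by
      have : b^2 * (L:ℝ) = a^2 * L := by ring_nf at h1 ⊢; linarith
      exact mul_right_cancel₀ hLr.ne' this
    rcases mul_eq_zero.mp (show (a-b)*(a+b) = 0 by linear_combination -h2) with h' | h'
    · linarith
    · linarith
  have hsb : s = b^2 → a = b := by
    intro h
    rw [hs_def] at h
    have h1 : a^2*((K:ℝ)-L) + b^2*L = b^2*K := by
      field_simp at h; linarith [h]
    have h2 : b^2 = a^2 := by
      have : a^2 * ((K:ℝ)-L) = b^2 * ((K:ℝ)-L) := by ring_nf at h1 ⊢; linarith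
      have := mul_right_cancel₀ hUr.ne' this
      linarith [this]
    rcases mul_eq_zero.mp (show (a-b)*(a+b) = 0 by linear_combination -h2) with h' | h'
    · linarith
    · linarith
  obtain ⟨c₀, c₁, c₂, hga, hgb, hgt⟩ := scalar_exists a b s t ha hb hs ht_def hsab hsa hsb
  -- gradient
  have hGrad : G = Et * Amat K L a b * Eeᵀ := by
    have h := grad_eq hK0 α Et Ee G hG
    rw [ha_def, hb_def]
    exact h
  have hEe2 : Ee * Eeᵀ = 1 := mul_eq_one_comm.mp hEe
  -- conjugation helpers
  have cm : ∀ X Y : Matrix (Fin K) (Fin K) ℝ,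
      (Ee * X * Eeᵀ) * (Ee * Y * Eeᵀ) = Ee * (X * Y) * Eeᵀ := fun X Y => mconj_mul Ee X Y hEe
  have esmul : ∀ (c : ℝ) (X : Matrix (Fin K) (Fin K) ℝ),
      c • (Ee * X * Eeᵀ) = Ee * (c • X) * Eeᵀ := fun c X => by
    rw [Matrix.mul_smul, Matrix.smul_mul]
  have eadd : ∀ X Y : Matrix (Fin K) (Fin K) ℝ,
      Ee * X * Eeᵀ + Ee * Y * Eeᵀ = Ee * (X + Y) * Eeᵀ := fun X Y => by
    rw [← Matrix.add_mul, ← Matrix.mul_add]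
  have esub : ∀ X Y : Matrix (Fin K) (Fin K) ℝ,
      Ee * X * Eeᵀ - Ee * Y * Eeᵀ = Ee * (X - Y) * Eeᵀ := fun X Y => by
    rw [← Matrix.sub_mul, ← Matrix.mul_sub]
  have hGtG : Gᵀ * G = Ee * Mmat K L a b * Eeᵀ := by
    rw [hGrad]
    rw [← hAtA hLltK hL0]
    simp only [Matrix.transpose_mul, Matrix.transpose_transpose, Matrix.mul_assoc]
    rw [← Matrix.mul_assoc Etᵀ Et _, hEt, Matrix.one_mul]
  have hrel : Gᵀ*G * (Gᵀ*G) * (Gᵀ*G) * (Gᵀ*G)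
      = (a^2+b^2+s) • (Gᵀ*G * (Gᵀ*G) * (Gᵀ*G)) - (a^2*b^2+(a^2+b^2)*s) • (Gᵀ*G * (Gᵀ*G))
        + (a^2*b^2*s) • (Gᵀ*G) := by
    rw [hGtG]
    simp only [cm]
    rw [esmul, esmul, esmul, esub, eadd]
    rw [hMr hLltK hL0]
  have hroot := svd_quartic hsvd (a^2+b^2+s) (a^2*b^2+(a^2+b^2)*s) (a^2*b^2*s) hrel
  have hq : ∀ i, (if d i = 0 then (0:ℝ) else 1)
      = d i * (c₀ + c₁ * d i ^ 2 + c₂ * (d i ^ 2)^2) := by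
    intro i
    have hdi : 0 ≤ d i := hsvd.2.2.2.2.1 i
    have hfac : d i^2 * (d i^2 - a^2) * (d i^2 - b^2) * (d i^2 - s) = 0 := by
      linear_combination hroot i
    rcases mul_eq_zero.mp hfac with h3 | h3
    · rcases mul_eq_zero.mp h3 with h2 | h2
      · rcases mul_eq_zero.mp h2 with h1 | h1
        · have hd0 : d i = 0 := pow_eq_zero_iff (by norm_num : (2:ℕ) ≠ 0) |>.mp h1
          simp [hd0]
        · have hda : d i = a := by
            rcases mul_eq_zero.mp (show (d i - a)*(d i + a) = 0 by linear_combination h1)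
              with h | h
            · linarith
            · linarith
          rw [hda, if_neg ha.ne']
          linear_combination -hga
      · have hdb : d i = b := by
          rcases mul_eq_zero.mp (show (d i - b)*(d i + b) = 0 by linear_combination h2)
            with h | h
          · linarith
          · linarith
        rw [hdb, if_neg hb.ne']
        linear_combination -hgb
    · have hdt : d i = t := by
        rcases mul_eq_zero.mp (show (d i - t)*(d i + t) = 0 by linear_combination h3 - ht2)
          with h | h
        · linarith
        · linarith
      rw [hdt, if_neg ht.ne']
      linear_combination -hgt
  -- assemble
  rw [muon_poly hsvd c₀ c₁ c₂ hq, hGtG]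
  rw [show (1 : Matrix (Fin K) (Fin K) ℝ) = Ee * 1 * Eeᵀ from by rw [Matrix.mul_one, hEe2]]
  simp only [cm]
  rw [esmul, esmul, esmul, eadd, eadd]
  rw [hGrad]
  have cross : ∀ X Y : Matrix (Fin K) (Fin K) ℝ,
      (Et * X * Eeᵀ) * (Ee * Y * Eeᵀ) = Et * (X * Y) * Eeᵀ := fun X Y => by
    simp only [Matrix.mul_assoc]
    rw [← Matrix.mul_assoc Eeᵀ Ee _, hEe, Matrix.one_mul]
  rw [cross]
  have hgs' : c₀ + c₁*((a^2*((K:ℝ)-L) + b^2*(L:ℝ))/(K:ℝ))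
      + c₂*((a^2*((K:ℝ)-L) + b^2*(L:ℝ))/(K:ℝ))^2 = t⁻¹ := by
    rw [← hs_def, ← ht2]
    have : t * (c₀ + c₁*t^2 + c₂*(t^2)^2) = t * t⁻¹ := by
      rw [mul_inv_cancel₀ ht.ne']
      linear_combination hgt
    exact mul_left_cancel₀ ht.ne' this
  rw [hAq hLltK hL0 c₀ c₁ c₂ t⁻¹ hga hgb hgs']
  have hsqrt : Real.sqrt ((K:ℝ)*(α^2*((K:ℝ)-L)^3 + (1-α)^2*(L:ℝ)^3))
      = (L:ℝ)*((K:ℝ)-L)*(K:ℝ)*t := by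
    have harg : (K:ℝ)*(α^2*((K:ℝ)-L)^3+(1-α)^2*(L:ℝ)^3)
        = ((L:ℝ)*((K:ℝ)-L)*(K:ℝ))^2 * s := by
      rw [hs_def, ha_def, hb_def]
      field_simp
    rw [harg, Real.sqrt_mul (sq_nonneg _), Real.sqrt_sq (by positivity), ht_def]
  have hu : (fun i : Fin K => if (i:ℕ) < L then (K:ℝ)-L else -(L:ℝ)) = uvec K L := rfl
  have hz : (fun i : Fin K => if (i:ℕ) < L then ((K:ℝ)-L)*α/L
      else -((L:ℝ)*(1-α)/((K:ℝ)-L))) = zvec K L a b := by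
    funext i
    simp only [zvec, vt]
    split
    · rw [ha_def]; ring
    · rw [hb_def]; ring
  rw [hu, hz, hsqrt, mul_inv ((L:ℝ)*((K:ℝ)-L)*(K:ℝ)) t]
  rw [Matrix.mul_neg, Matrix.neg_mul]
  congr 1
  simp only [P1m, P2m, Qmat]
  rw [Matrix.mul_add, Matrix.mul_add, Matrix.add_mul, Matrix.add_mul,
    Matrix.mul_smul, Matrix.smul_mul, Matrix.mul_vmv_mul]

end
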